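/- arXiv:2510.04930 — 3 statements merged into one kernel-verified Lean document; each statement's English description precedes it below -/
import Mathlib

section
/- Let z ~ N(0, I₂) and let a, b, c be unit vectors in ℝ². Then P((zᵀa)(zᵀb) ≤ 0 ∣ (zᵀa)(zᵀc) ≤ 0) = [arccos(aᵀc) + arccos(aᵀb) − arccos(bᵀc)] / (2·arccos(aᵀc)), provided arccos(aᵀc) > 0. -/
/-!
In polar coordinates the standard Gaussian on `ℝ²` has a uniform angle independent of the radius,
so a cone has probability equal to its angular measure divided by `2π`. For unit vectors `u, v`
at angle `θ = arccos (u ⬝ v)`, the double wedge `{z | (z ⬝ u) (z ⬝ v) ≤ 0}` has angular measure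
`2θ`, hence probability `θ / π`. Off the null set where one of `z ⬝ a, z ⬝ b, z ⬝ c` vanishes,
the three signs satisfy `𝟙[ab ∧ ac] = (𝟙[ab] + 𝟙[ac] - 𝟙[bc]) / 2`, and integrating this gives
the formula.
-/

open MeasureTheory ProbabilityTheory Real Set
open scoped NNReal

lemma exists_eq_cos_sin {u : ℝ × ℝ} (hu : u.1 ^ 2 + u.2 ^ 2 = 1) :
    ∃ α, u = (cos α, sin α) := by
  set w : ℂ := ⟨u.1, u.2⟩
  have hw : ‖w‖ = 1 := by
    rw [Complex.norm_def, Complex.normSq_apply, ← sqrt_one]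
    congr 1
    simp only [w]
    linarith
  have hw0 : w ≠ 0 := norm_ne_zero_iff.mp (hw ▸ one_ne_zero)
  exact ⟨w.arg, Prod.ext (by rw [Complex.cos_arg hw0, hw, div_one])
    (by rw [Complex.sin_arg, hw, div_one])⟩

lemma cos_le_iff_arccos_le_abs {y s : ℝ} (hy₁ : -1 ≤ y) (hy₂ : y ≤ 1) (hs : |s| ≤ π) :
    cos s ≤ y ↔ arccos y ≤ |s| := by
  rw [← cos_abs, ← strictAntiOn_cos.le_iff_ge ⟨abs_nonneg s, hs⟩
    ⟨arccos_nonneg y, arccos_le_pi y⟩, cos_arccos hy₁ hy₂]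

lemma ite_mul_nonpos_and_eq {x y w : ℝ} (hx : x ≠ 0) (hy : y ≠ 0) (hw : w ≠ 0) :
    (if x * y ≤ 0 ∧ x * w ≤ 0 then (1 : ℝ) else 0)
      = ((if x * y ≤ 0 then 1 else 0) + (if x * w ≤ 0 then 1 else 0)
        - (if y * w ≤ 0 then 1 else 0)) / 2 := by
  rcases hx.lt_or_gt with hx | hx <;> rcases hy.lt_or_gt with hy | hy <;>
    rcases hw.lt_or_gt with hw | hw <;>
    simp [mul_nonpos_iff, hx.le, hy.le, hw.le, hx.not_ge, hy.not_ge, hw.not_ge]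

theorem integral_Ioi_mul_exp_neg_mul_sq {b : ℝ} (hb : 0 < b) :
    ∫ r in Ioi (0 : ℝ), r * exp (-b * r ^ 2) = (2 * b)⁻¹ := by
  have h := integral_mul_cexp_neg_mul_sq (b := b) (by simpa using hb)
  rw [← Complex.ofReal_inj]
  push_cast
  rw [← h, ← integral_complex_ofReal]
  push_cast
  rfl

lemma measureReal_inter_Ioo_eq_intervalIntegral {S : Set ℝ} (hS : MeasurableSet S) {a b : ℝ}
    (hab : a ≤ b) : volume.real (S ∩ Ioo a b) = ∫ x in a..b, S.indicator 1 x := by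
  rw [intervalIntegral.integral_of_le hab, integral_Ioc_eq_integral_Ioo, setIntegral_indicator hS]
  simp [inter_comm]

lemma volume_real_cos_le_inter_Ioo {y : ℝ} (hy₁ : -1 ≤ y) (hy₂ : y ≤ 1) :
    volume.real ({s | cos s ≤ y} ∩ Ioo (-π) π) = 2 * (π - arccos y) := by
  have hset : {s | cos s ≤ y} ∩ Ioo (-π) π = Ioo (-π) π \ Ioo (-arccos y) (arccos y) := by
    ext s
    simp only [mem_inter_iff, mem_ofPred_eq, mem_sdiff, mem_Ioo, ← abs_lt, not_lt]
    rw [and_comm]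
    exact and_congr_right fun hs => cos_le_iff_arccos_le_abs hy₁ hy₂ hs.le
  have hA := arccos_le_pi y
  rw [hset, measureReal_sdiff (Ioo_subset_Ioo (by linarith) hA) measurableSet_Ioo
      measure_Ioo_lt_top.ne, volume_real_Ioo_of_le (by linarith [pi_pos]),
    volume_real_Ioo_of_le (by linarith [arccos_nonneg y])]
  ring

lemma volume_real_cos_sub_mul_cos_sub_nonpos (α β : ℝ) :
    volume.real ({θ | cos (θ - α) * cos (θ - β) ≤ 0} ∩ Ioo (-π) π)
      = 2 * arccos (cos (α - β)) := by
  -- `cos (θ - α) cos (θ - β) ≤ 0 ↔ cos (2θ - (α + β)) ≤ -cos (α - β)`, and the substitution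
  -- `s = 2θ - (α + β)` turns `(-π, π)` into two periods of `cos`.
  set S := {s | cos s ≤ -cos (α - β)}
  have hS : MeasurableSet S := measurableSet_le (by fun_prop) measurable_const
  have hper : Function.Periodic (S.indicator (1 : ℝ → ℝ)) (2 * π) := fun s =>
    indicator_eq_indicator (g := (1 : ℝ → ℝ)) (by simp [S, cos_add_two_pi]) rfl
  have hint : ∀ t₁ t₂, IntervalIntegrable (S.indicator (1 : ℝ → ℝ)) volume t₁ t₂ := fun _ _ =>
    intervalIntegrable_iff.2 ((integrableOn_const measure_Ioc_lt_top.ne).indicator hS)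
  have hdouble : ∀ θ, cos (θ - α) * cos (θ - β) = (cos (2 * θ - (α + β)) + cos (α - β)) / 2 := by
    intro θ
    rw [show 2 * θ - (α + β) = (θ - α) + (θ - β) by ring, show α - β = (θ - β) - (θ - α) by ring,
      cos_add (θ - α), cos_sub (θ - β)]
    ring
  have hsubst : ∀ θ, {θ | cos (θ - α) * cos (θ - β) ≤ 0}.indicator (1 : ℝ → ℝ) θ
      = S.indicator 1 (2 * θ - (α + β)) := fun θ =>
    indicator_eq_indicator (by simp only [mem_ofPred_eq, S, hdouble]; constructor <;> intro h <;>
      linarith) rfl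
  rw [measureReal_inter_Ioo_eq_intervalIntegral (measurableSet_le (by fun_prop) measurable_const)
    (by linarith [pi_pos])]
  simp_rw [hsubst]
  rw [intervalIntegral.integral_comp_mul_sub _ two_ne_zero,
    show 2 * π - (α + β) = 2 * -π - (α + β) + (2 : ℤ) • (2 * π) by ring,
    hper.intervalIntegral_add_zsmul_eq 2 _ hint, hper.intervalIntegral_add_eq _ (-π),
    show -π + 2 * π = π by ring,
    ← measureReal_inter_Ioo_eq_intervalIntegral hS (by linarith [pi_pos]),
    volume_real_cos_le_inter_Ioo (by linarith [cos_le_one (α - β)])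
      (by linarith [neg_one_le_cos (α - β)]), arccos_neg]
  simp

lemma gaussianReal_prod_eq_withDensity (m₁ m₂ : ℝ) {v₁ v₂ : ℝ≥0} (h₁ : v₁ ≠ 0) (h₂ : v₂ ≠ 0) :
    (gaussianReal m₁ v₁).prod (gaussianReal m₂ v₂) = volume.withDensity fun z : ℝ × ℝ =>
      ENNReal.ofReal (gaussianPDFReal m₁ v₁ z.1 * gaussianPDFReal m₂ v₂ z.2) := by
  refine Measure.prod_eq fun s t hs ht => ?_
  simp_rw [ENNReal.ofReal_mul (gaussianPDFReal_nonneg _ _ _)]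
  rw [withDensity_apply _ (hs.prod ht), Measure.volume_eq_prod, ← Measure.prod_restrict,
    lintegral_prod_mul (measurable_gaussianPDFReal _ _).ennreal_ofReal.aemeasurable
      (measurable_gaussianPDFReal _ _).ennreal_ofReal.aemeasurable,
    gaussianReal_apply _ h₁, gaussianReal_apply _ h₂]
  rfl

lemma gaussianPDFReal_mul_polar (r θ : ℝ) :
    gaussianPDFReal 0 1 (r * cos θ) * gaussianPDFReal 0 1 (r * sin θ)
      = (2 * π)⁻¹ * exp (-2⁻¹ * r ^ 2) := by
  simp only [gaussianPDFReal, NNReal.coe_one, mul_one, sub_zero]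
  rw [mul_mul_mul_comm, ← mul_inv, mul_self_sqrt (by positivity), ← exp_add]
  congr 2
  linear_combination (-2⁻¹ * r ^ 2) * sin_sq_add_cos_sq θ

noncomputable def stdGaussianPlane : Measure (ℝ × ℝ) := (gaussianReal 0 1).prod (gaussianReal 0 1)

instance : IsProbabilityMeasure stdGaussianPlane := by
  unfold stdGaussianPlane
  infer_instance

lemma stdGaussianPlane_eq_withDensity : stdGaussianPlane = volume.withDensity
    (fun z : ℝ × ℝ => ENNReal.ofReal (gaussianPDFReal 0 1 z.1 * gaussianPDFReal 0 1 z.2)) :=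
  gaussianReal_prod_eq_withDensity 0 0 one_ne_zero one_ne_zero

lemma stdGaussianPlane_orthogonal_line_eq_zero {u : ℝ × ℝ} (hu : u ≠ 0) :
    stdGaussianPlane {z | z.1 * u.1 + z.2 * u.2 = 0} = 0 := by
  let L : ℝ × ℝ →ₗ[ℝ] ℝ := u.1 • LinearMap.fst ℝ ℝ ℝ + u.2 • LinearMap.snd ℝ ℝ ℝ
  have hL : LinearMap.ker L ≠ ⊤ := fun h => by
    have hLu : u.1 * u.1 + u.2 * u.2 = 0 := LinearMap.congr_fun (LinearMap.ker_eq_top.1 h) u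
    exact hu (Prod.ext_iff.2 (mul_self_add_mul_self_eq_zero.1 hLu))
  rw [stdGaussianPlane_eq_withDensity]
  refine withDensity_absolutelyContinuous _ _ ?_
  convert Measure.addHaar_submodule volume _ hL using 2
  ext z
  simp [L, mul_comm]

theorem stdGaussianPlane_real_of_cone {E : Set (ℝ × ℝ)} (hE : MeasurableSet E) {T : Set ℝ}
    (hT : MeasurableSet T) (hET : ∀ r > 0, ∀ θ, (r * cos θ, r * sin θ) ∈ E ↔ θ ∈ T) :
    stdGaussianPlane.real E = volume.real (T ∩ Ioo (-π) π) / (2 * π) := by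
  have hpolar : ∀ p ∈ polarCoord.target,
      p.1 • ((gaussianPDFReal 0 1 (polarCoord.symm p).1
          * gaussianPDFReal 0 1 (polarCoord.symm p).2) • E.indicator 1 (polarCoord.symm p))
        = (p.1 * exp (-2⁻¹ * p.1 ^ 2)) * ((2 * π)⁻¹ * T.indicator 1 p.2) := by
    rintro ⟨r, θ⟩ ⟨hr, -⟩
    rw [show polarCoord.symm (r, θ) = (r * cos θ, r * sin θ) from rfl,
      indicator_eq_indicator (g := (1 : ℝ → ℝ)) (hET r hr θ) rfl, gaussianPDFReal_mul_polar,
      smul_eq_mul, smul_eq_mul]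
    ring
  rw [← integral_indicator_one hE, stdGaussianPlane_eq_withDensity,
    integral_withDensity_eq_integral_toReal_smul (by fun_prop)
      (.of_forall fun _ => ENNReal.ofReal_lt_top)]
  simp_rw [ENNReal.toReal_ofReal (mul_nonneg (gaussianPDFReal_nonneg _ _ _)
    (gaussianPDFReal_nonneg _ _ _))]
  rw [← integral_comp_polarCoord_symm,
    setIntegral_congr_fun polarCoord.open_target.measurableSet hpolar, polarCoord_target,
    Measure.volume_eq_prod,
    setIntegral_prod_mul (fun r => r * exp (-2⁻¹ * r ^ 2)) (fun θ => (2 * π)⁻¹ * T.indicator 1 θ),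
    integral_Ioi_mul_exp_neg_mul_sq (by norm_num), integral_const_mul, setIntegral_indicator hT]
  simp [inter_comm, div_eq_inv_mul]

/-- The directions `z` whose orthogonal line weakly separates `u` and `v`. -/
def separatingDirections (u v : ℝ × ℝ) : Set (ℝ × ℝ) :=
  {z | (z.1 * u.1 + z.2 * u.2) * (z.1 * v.1 + z.2 * v.2) ≤ 0}

lemma measurableSet_separatingDirections (u v : ℝ × ℝ) :
    MeasurableSet (separatingDirections u v) :=
  measurableSet_le (by fun_prop) measurable_const

theorem stdGaussianPlane_real_separatingDirections {u v : ℝ × ℝ} (hu : u.1 ^ 2 + u.2 ^ 2 = 1)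
    (hv : v.1 ^ 2 + v.2 ^ 2 = 1) :
    stdGaussianPlane.real (separatingDirections u v) = arccos (u.1 * v.1 + u.2 * v.2) / π := by
  obtain ⟨α, rfl⟩ := exists_eq_cos_sin hu
  obtain ⟨β, rfl⟩ := exists_eq_cos_sin hv
  have hcone : ∀ r > 0, ∀ θ,
      (r * cos θ, r * sin θ) ∈ separatingDirections (cos α, sin α) (cos β, sin β)
        ↔ θ ∈ {θ | cos (θ - α) * cos (θ - β) ≤ 0} := by
    intro r hr θ
    have hpolar : (r * cos θ * cos α + r * sin θ * sin α) * (r * cos θ * cos β + r * sin θ * sin β)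
        = r ^ 2 * (cos (θ - α) * cos (θ - β)) := by
      rw [cos_sub, cos_sub]
      ring
    rw [separatingDirections, mem_ofPred_eq, mem_ofPred_eq, hpolar, ← neg_nonneg, ← mul_neg,
      mul_nonneg_iff_of_pos_left (by positivity), neg_nonneg]
  rw [stdGaussianPlane_real_of_cone (measurableSet_separatingDirections _ _)
    (measurableSet_le (by fun_prop) measurable_const) hcone,
    volume_real_cos_sub_mul_cos_sub_nonpos, ← cos_sub]
  field_simp

theorem stdGaussianPlane_real_inter_separatingDirections {a b c : ℝ × ℝ} (ha : a ≠ 0)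
    (hb : b ≠ 0) (hc : c ≠ 0) :
    stdGaussianPlane.real (separatingDirections a b ∩ separatingDirections a c)
      = (stdGaussianPlane.real (separatingDirections a b)
        + stdGaussianPlane.real (separatingDirections a c)
        - stdGaussianPlane.real (separatingDirections b c)) / 2 := by
  have hoff : ∀ u ≠ (0 : ℝ × ℝ), ∀ᵐ z ∂stdGaussianPlane, z.1 * u.1 + z.2 * u.2 ≠ 0 :=
    fun u hu => measure_eq_zero_iff_ae_notMem.1 (stdGaussianPlane_orthogonal_line_eq_zero hu)
  have hind : (separatingDirections a b ∩ separatingDirections a c).indicator (1 : ℝ × ℝ → ℝ)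
      =ᵐ[stdGaussianPlane] fun z => ((separatingDirections a b).indicator 1 z
        + (separatingDirections a c).indicator 1 z
        - (separatingDirections b c).indicator 1 z) / 2 := by
    filter_upwards [hoff a ha, hoff b hb, hoff c hc] with z hza hzb hzc
    simp only [indicator_apply, mem_inter_iff, separatingDirections, mem_ofPred_eq, Pi.one_apply]
    exact ite_mul_nonpos_and_eq hza hzb hzc
  have hint : ∀ u v,
      Integrable ((separatingDirections u v).indicator (1 : ℝ × ℝ → ℝ)) stdGaussianPlane :=
    fun u v => (integrable_const 1).indicator (measurableSet_separatingDirections u v)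
  rw [← integral_indicator_one ((measurableSet_separatingDirections a b).inter
      (measurableSet_separatingDirections a c)), integral_congr_ae hind, integral_div,
    integral_sub ((hint a b).fun_add (hint a c)) (hint b c), integral_add (hint a b) (hint a c),
    integral_indicator_one (measurableSet_separatingDirections a b),
    integral_indicator_one (measurableSet_separatingDirections a c),
    integral_indicator_one (measurableSet_separatingDirections b c)]

/-- For `z ~ N(0, I₂)` and unit vectors `a, b, c ∈ ℝ²` with `aᵀc < 1`
(so `arccos(aᵀc) > 0` and the conditioning event has positive probability),
`P((zᵀa)(zᵀb) ≤ 0 ∣ (zᵀa)(zᵀc) ≤ 0)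
  = [arccos(aᵀc) + arccos(aᵀb) − arccos(bᵀc)] / (2 arccos(aᵀc))`. -/
theorem gaussian_conditional_orthant
    (μ : Measure (ℝ × ℝ))
    (hμ : μ = (gaussianReal 0 1).prod (gaussianReal 0 1))
    (a b c : ℝ × ℝ)
    (ha : a.1 ^ 2 + a.2 ^ 2 = 1) (hb : b.1 ^ 2 + b.2 ^ 2 = 1)
    (hc : c.1 ^ 2 + c.2 ^ 2 = 1)
    (hac : a.1 * c.1 + a.2 * c.2 < 1) :
    (μ ({z : ℝ × ℝ | (z.1 * a.1 + z.2 * a.2) * (z.1 * b.1 + z.2 * b.2) ≤ 0}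
        ∩ {z : ℝ × ℝ | (z.1 * a.1 + z.2 * a.2) * (z.1 * c.1 + z.2 * c.2) ≤ 0})).toReal
      / (μ {z : ℝ × ℝ | (z.1 * a.1 + z.2 * a.2) * (z.1 * c.1 + z.2 * c.2) ≤ 0}).toReal
    = (Real.arccos (a.1 * c.1 + a.2 * c.2) + Real.arccos (a.1 * b.1 + a.2 * b.2)
        - Real.arccos (b.1 * c.1 + b.2 * c.2))
      / (2 * Real.arccos (a.1 * c.1 + a.2 * c.2)) := by
  obtain rfl : μ = stdGaussianPlane := hμ
  have ne_zero : ∀ {u : ℝ × ℝ}, u.1 ^ 2 + u.2 ^ 2 = 1 → u ≠ 0 := by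
    rintro u hu rfl
    norm_num at hu
  change stdGaussianPlane.real (separatingDirections a b ∩ separatingDirections a c)
    / stdGaussianPlane.real (separatingDirections a c) = _
  rw [stdGaussianPlane_real_inter_separatingDirections (ne_zero ha) (ne_zero hb) (ne_zero hc),
    stdGaussianPlane_real_separatingDirections ha hb,
    stdGaussianPlane_real_separatingDirections ha hc,
    stdGaussianPlane_real_separatingDirections hb hc]
  have := arccos_pos.2 hac
  field_simp
  ring
end

section
/- In the toy model with μ_k = α^k(u₁ − m₁/m₂) + m₁/m₂ and ν_k = β^k u₂ where 0 < α < β < 1, u₁ = O(1), m₁, m₂ > 0, the cosine alignment r_k = μ_k/√(μ_k² + ε ν_k²) is strictly increasing in k for k large enough (once μ_k > 0), and r_k → 1 as k → ∞; consequently the angle between w(k) and the ground-truth direction e₁ (in the Σ-inner product with Σ = diag(1, ε)) tends to 0. -/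
/-!
We have `μ_k → m₁/m₂ > 0` and `ν_{k+1} = β ν_k → 0`, which gives the limit.
The Σ-cosine `μ / √(μ² + ε ν²)` only depends on the ratio `|ν| / μ` and decreases in it,
and that ratio shrinks at each step as soon as `μ_{k+1} > β μ_k`, which holds eventually
because `μ_{k+1} - β μ_k → (1 - β) m₁/m₂ > 0`.
-/

open Filter Topology

/-- The cosine of the angle between `(μ, ν)` and `(1, 0)` for the inner product `diag(1, ε)`. -/
noncomputable def sigmaCos (ε μ ν : ℝ) : ℝ :=
  μ / Real.sqrt (μ ^ 2 + ε * ν ^ 2)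

theorem sigmaCos_lt_sigmaCos {ε a b x y : ℝ} (hε : 0 < ε) (ha : 0 < a) (hb : 0 < b)
    (h : |y| * a < |x| * b) : sigmaCos ε a x < sigmaCos ε b y := by
  have hA : 0 < a ^ 2 + ε * x ^ 2 := by positivity
  have hB : 0 < b ^ 2 + ε * y ^ 2 := by positivity
  unfold sigmaCos
  rw [div_lt_div_iff₀ (Real.sqrt_pos.mpr hA) (Real.sqrt_pos.mpr hB)]
  refine lt_of_pow_lt_pow_left₀ 2 (by positivity) ?_
  have hsq : (|y| * a) ^ 2 < (|x| * b) ^ 2 := pow_lt_pow_left₀ h (by positivity) two_ne_zero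
  rw [mul_pow, mul_pow, Real.sq_sqrt hA.le, Real.sq_sqrt hB.le]
  rw [mul_pow, mul_pow, sq_abs, sq_abs] at hsq
  nlinarith [mul_lt_mul_of_pos_left hsq hε]

theorem tendsto_sigmaCos {ι : Type*} {l : Filter ι} {ε L : ℝ} {μ ν : ι → ℝ} (hL : 0 < L)
    (hμ : Tendsto μ l (𝓝 L)) (hν : Tendsto ν l (𝓝 0)) :
    Tendsto (fun i => sigmaCos ε (μ i) (ν i)) l (𝓝 1) := by
  have hnorm : Tendsto (fun i => Real.sqrt (μ i ^ 2 + ε * ν i ^ 2)) l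
      (𝓝 (Real.sqrt (L ^ 2 + ε * 0 ^ 2))) :=
    ((hμ.pow 2).add ((hν.pow 2).const_mul ε)).sqrt
  rw [zero_pow two_ne_zero, mul_zero, add_zero, Real.sqrt_sq hL.le] at hnorm
  simpa only [sigmaCos, Pi.div_def, div_self hL.ne'] using hμ.div hnorm hL.ne'

theorem eventually_sigmaCos_lt_succ {ε β L : ℝ} {μ ν : ℕ → ℝ} (hε : 0 < ε) (hL : 0 < L)
    (hβ : |β| < 1) (hμ : Tendsto μ atTop (𝓝 L)) (hν : ∀ k, ν (k + 1) = β * ν k)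
    (hν0 : ∀ k, ν k ≠ 0) :
    ∀ᶠ k in atTop, sigmaCos ε (μ k) (ν k) < sigmaCos ε (μ (k + 1)) (ν (k + 1)) := by
  have hpos : ∀ᶠ k in atTop, 0 < μ k := hμ.eventually (lt_mem_nhds hL)
  have hgap : ∀ᶠ k in atTop, |β| * μ k < μ (k + 1) := by
    have hlim : Tendsto (fun k => μ (k + 1) - |β| * μ k) atTop (𝓝 (L - |β| * L)) :=
      ((tendsto_add_atTop_iff_nat 1).mpr hμ).sub (hμ.const_mul _)
    filter_upwards [hlim.eventually (lt_mem_nhds (by nlinarith : 0 < L - |β| * L))] with k hk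
    linarith
  filter_upwards [hpos, hgap] with k hk hgapk
  have hk1 : 0 < μ (k + 1) := (mul_nonneg (abs_nonneg β) hk.le).trans_lt hgapk
  refine sigmaCos_lt_sigmaCos hε hk hk1 ?_
  rw [hν]
  calc |β * ν k| * μ k = |ν k| * (|β| * μ k) := by rw [abs_mul]; ring
    _ < |ν k| * μ (k + 1) := mul_lt_mul_of_pos_left hgapk (abs_pos.mpr (hν0 k))

theorem toy_alignment_tendsto_one_general
    (α β ε m₁ m₂ u₁ u₂ : ℝ)
    (hα : 0 < α) (hαβ : α < β) (hβ : β < 1)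
    (hm₁ : 0 < m₁) (hm₂ : 0 < m₂) (hε : ε ∈ Set.Ioo (0 : ℝ) 1)
    (hu₂ : u₂ ≠ 0)
    (μ ν r : ℕ → ℝ)
    (hμ : ∀ k, μ k = α ^ k * (u₁ - m₁ / m₂) + m₁ / m₂)
    (hν : ∀ k, ν k = β ^ k * u₂)
    (hr : ∀ k, r k = μ k / Real.sqrt ((μ k) ^ 2 + ε * (ν k) ^ 2)) :
    (∃ K : ℕ, ∀ k ≥ K, r k < r (k + 1)) ∧
    Tendsto r atTop (𝓝 1) ∧
    Tendsto (fun k => Real.arccos (r k)) atTop (𝓝 0) := by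
  have hβ0 : 0 < β := hα.trans hαβ
  have hL : 0 < m₁ / m₂ := div_pos hm₁ hm₂
  have hμL : Tendsto μ atTop (𝓝 (m₁ / m₂)) := by
    simpa [funext hμ] using
      ((tendsto_pow_atTop_nhds_zero_of_lt_one hα.le (hαβ.trans hβ)).mul_const
        (u₁ - m₁ / m₂)).add_const (m₁ / m₂)
  have hν0 : Tendsto ν atTop (𝓝 0) := by
    simpa [funext hν] using (tendsto_pow_atTop_nhds_zero_of_lt_one hβ0.le hβ).mul_const u₂
  have hr' : r = fun k => sigmaCos ε (μ k) (ν k) := funext hr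
  have hrt : Tendsto r atTop (𝓝 1) := hr' ▸ tendsto_sigmaCos hL hμL hν0
  refine ⟨?_, hrt, by simpa [Function.comp_def, Real.arccos_one] using (Real.continuous_arccos.tendsto 1).comp hrt⟩
  have hmono := eventually_sigmaCos_lt_succ (ν := ν) hε.1 hL (abs_lt.mpr ⟨by linarith, hβ⟩) hμL
    (fun k => by rw [hν, hν, pow_succ]; ring)
    (fun k => by rw [hν]; exact mul_ne_zero (pow_ne_zero _ hβ0.ne') hu₂)
  simpa [hr'] using eventually_atTop.mp hmono

/-- In the toy model, with `μ_k = α^k (u₁ − m₁/m₂) + m₁/m₂`, `ν_k = β^k u₂`,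
`0 < α < β < 1`, `m₁, m₂ > 0`, `u₂ ≠ 0`, and `μ_k > 0` eventually, the
Σ-cosine alignment `r_k = μ_k / √(μ_k² + ε ν_k²)` is eventually strictly
increasing, tends to `1`, and hence the Σ-angle `arccos(r_k)` between `w(k)`
and the ground-truth direction `e₁` tends to `0`. -/
theorem toy_alignment_tendsto_one
    (α β ε m₁ m₂ u₁ u₂ : ℝ)
    (hα : 0 < α) (hαβ : α < β) (hβ : β < 1)
    (hm₁ : 0 < m₁) (hm₂ : 0 < m₂) (hε : ε ∈ Set.Ioo (0 : ℝ) 1)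
    (hu₂ : u₂ ≠ 0)
    (μ ν r : ℕ → ℝ)
    (hμ : ∀ k, μ k = α ^ k * (u₁ - m₁ / m₂) + m₁ / m₂)
    (hν : ∀ k, ν k = β ^ k * u₂)
    (hr : ∀ k, r k = μ k / Real.sqrt ((μ k) ^ 2 + ε * (ν k) ^ 2))
    (hpos : ∃ K : ℕ, ∀ k ≥ K, 0 < μ k) :
    (∃ K : ℕ, ∀ k ≥ K, r k < r (k + 1)) ∧
    Tendsto r atTop (𝓝 1) ∧
    Tendsto (fun k => Real.arccos (r k)) atTop (𝓝 0) :=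
  toy_alignment_tendsto_one_general α β ε m₁ m₂ u₁ u₂ hα hαβ hβ hm₁ hm₂ hε hu₂ μ ν r hμ hν hr
end

section
/- Let x = (x⁽¹⁾, x⁽²⁾) be distributed as z ~ N(0, diag(1, ε)) conditioned on |z⁽¹⁾| ≥ s, and let y = sign(x⁽¹⁾). Then E[y·x] = (m₁, 0) where m₁ = φ(s)/Q(s), and E[x xᵀ] = diag(m₂, ε) where m₂ = 1 + s·m₁. Consequently the population least-squares solution argmin_w E[(xᵀw − y)²] equals (m₁/m₂, 0), which is a positive multiple of the Bayes-optimal direction e₁. -/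
/-!
Conditioning on `s ≤ |z⁽¹⁾|` only involves the first coordinate, so the conditional law is the
standard normal restricted to `{s ≤ |x|}` times the independent `N(0, ε)`; all cross moments
vanish because the second factor is centred. The truncated moments of the first coordinate are
twice the one-sided tail integrals, and `φ' = -x φ` gives `∫ₛ^∞ x φ = φ(s)` and
`∫ₛ^∞ x² φ = s φ(s) + Q(s)`. Since `E[x⁽¹⁾ x⁽²⁾] = 0`, the squared loss at `w` splits as
`E[(x⁽¹⁾ w₁ - y)²] + ε w₂²` (up to the normalisation), a one-dimensional least-squares problem
minimised at `E[y x⁽¹⁾] / E[(x⁽¹⁾)²] = m₁ / m₂`.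
-/

open MeasureTheory ProbabilityTheory Real Set Filter Topology
open scoped NNReal

namespace Real

lemma measurable_sign : Measurable Real.sign :=
  Measurable.ite (measurableSet_lt measurable_id measurable_const) measurable_const <|
    Measurable.ite (measurableSet_lt measurable_const measurable_id) measurable_const
      measurable_const

lemma abs_sign_le_one (x : ℝ) : |Real.sign x| ≤ 1 := by
  rcases Real.sign_apply_eq x with h | h | h <;> simp [h]

lemma sign_mul_self_eq_abs (x : ℝ) : Real.sign x * x = |x| := by
  rcases lt_trichotomy x 0 with h | rfl | h
  · simp [Real.sign_of_neg h, abs_of_neg h]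
  · simp
  · simp [Real.sign_of_pos h, abs_of_pos h]

end Real

lemma setIntegral_le_abs_comp_abs {s : ℝ} (hs : 0 ≤ s) (f : ℝ → ℝ) :
    ∫ x in {x : ℝ | s ≤ |x|}, f |x| = 2 * ∫ x in Ioi s, f x := by
  have hA : MeasurableSet {x : ℝ | s ≤ |x|} := measurableSet_le measurable_const measurable_abs
  rw [← integral_indicator hA]
  have : {x : ℝ | s ≤ |x|}.indicator (fun x => f |x|) = fun x => (Ici s).indicator f |x| := by
    ext x; by_cases hx : s ≤ |x| <;> simp [hx]
  rw [this, integral_comp_abs, setIntegral_indicator measurableSet_Ici]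
  rcases hs.eq_or_lt with rfl | hs
  · rw [inter_eq_left.mpr Ioi_subset_Ici_self]
  · rw [inter_eq_right.mpr (Ici_subset_Ioi.mpr hs), integral_Ici_eq_integral_Ioi]

namespace ProbabilityTheory

lemma hasDerivAt_gaussianPDFReal (μ : ℝ) (v : ℝ≥0) (x : ℝ) :
    HasDerivAt (gaussianPDFReal μ v) (-((x - μ) / v) * gaussianPDFReal μ v x) x := by
  have hq : HasDerivAt (fun y => -(y - μ) ^ 2 / (2 * v)) (-((x - μ) / v)) x :=
    (((hasDerivAt_id x).sub_const μ).pow 2).neg.div_const (2 * (v : ℝ)) |>.congr_deriv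
      (by simp only [id, Nat.cast_ofNat]; ring)
  exact (hq.exp.const_mul (√(2 * π * v))⁻¹).congr_deriv (by unfold gaussianPDFReal; ring)

lemma integrable_pow_gaussianReal (μ : ℝ) (v : ℝ≥0) (n : ℕ) :
    Integrable (fun x => x ^ n) (gaussianReal μ v) :=
  integrable_pow_of_mem_interior_integrableExpSet (X := fun x => x) (by simp) n

lemma integrable_pow_mul_gaussianPDFReal (μ : ℝ) (v : ℝ≥0) (n : ℕ) :
    Integrable (fun x => x ^ n * gaussianPDFReal μ v x) := by
  rcases eq_or_ne v 0 with rfl | hv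
  · simp [gaussianPDFReal_zero_var]
  have h := integrable_pow_gaussianReal μ v n
  rw [gaussianReal_of_var_ne_zero _ hv, integrable_withDensity_iff_integrable_smul'
    (measurable_gaussianPDF μ v) (ae_of_all _ fun _ => gaussianPDF_lt_top)] at h
  simpa [toReal_gaussianPDF, mul_comm] using h

lemma setIntegral_gaussianReal_eq_setIntegral_smul {E : Type*} [NormedAddCommGroup E]
    [NormedSpace ℝ E] {μ : ℝ} {v : ℝ≥0} {f : ℝ → E} (hv : v ≠ 0) {A : Set ℝ}
    (hA : MeasurableSet A) :
    ∫ x in A, f x ∂gaussianReal μ v = ∫ x in A, gaussianPDFReal μ v x • f x := by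
  rw [← integral_indicator hA, integral_gaussianReal_eq_integral_smul hv,
    ← integral_indicator hA]
  congr 1 with x
  by_cases hx : x ∈ A <;> simp [hx]

lemma gaussianPDFReal_zero_abs (v : ℝ≥0) (x : ℝ) :
    gaussianPDFReal 0 v |x| = gaussianPDFReal 0 v x := by
  simp [gaussianPDFReal]

lemma integral_Ioi_mul_gaussianPDFReal (s : ℝ) :
    ∫ x in Ioi s, x * gaussianPDFReal 0 1 x = gaussianPDFReal 0 1 s := by
  have hderiv (x : ℝ) :
      HasDerivAt (fun y => -gaussianPDFReal 0 1 y) (x * gaussianPDFReal 0 1 x) x :=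
    (hasDerivAt_gaussianPDFReal 0 1 x).neg.congr_deriv (by simp)
  have hint := integrable_pow_mul_gaussianPDFReal 0 1 1
  simp only [pow_one] at hint
  have hlim : Tendsto (fun y => -gaussianPDFReal 0 1 y) atTop (𝓝 0) :=
    tendsto_zero_of_hasDerivAt_of_integrableOn_Ioi (a := 0) (fun x _ => hderiv x)
      hint.integrableOn (integrable_gaussianPDFReal 0 1).neg.integrableOn
  simpa using
    integral_Ioi_of_hasDerivAt_of_tendsto' (a := s) (fun x _ => hderiv x) hint.integrableOn hlim

lemma integral_Ioi_sq_mul_gaussianPDFReal (s : ℝ) :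
    ∫ x in Ioi s, x ^ 2 * gaussianPDFReal 0 1 x
      = s * gaussianPDFReal 0 1 s + ∫ x in Ioi s, gaussianPDFReal 0 1 x := by
  have hderiv (x : ℝ) : HasDerivAt (fun y => -(y * gaussianPDFReal 0 1 y))
      (x ^ 2 * gaussianPDFReal 0 1 x - gaussianPDFReal 0 1 x) x :=
    ((hasDerivAt_id x).mul (hasDerivAt_gaussianPDFReal 0 1 x)).neg.congr_deriv
      (by simp only [id, NNReal.coe_one, div_one]; ring)
  have hint₁ := integrable_pow_mul_gaussianPDFReal 0 1 1
  have hint₂ := integrable_pow_mul_gaussianPDFReal 0 1 2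
  have hint₀ := integrable_gaussianPDFReal 0 1
  simp only [pow_one] at hint₁
  have hlim : Tendsto (fun y => -(y * gaussianPDFReal 0 1 y)) atTop (𝓝 0) :=
    tendsto_zero_of_hasDerivAt_of_integrableOn_Ioi (a := 0) (fun x _ => hderiv x)
      (hint₂.sub hint₀).integrableOn hint₁.neg.integrableOn
  have h := integral_Ioi_of_hasDerivAt_of_tendsto' (a := s) (fun x _ => hderiv x)
    (hint₂.sub hint₀).integrableOn hlim
  rw [integral_sub hint₂.integrableOn hint₀.integrableOn] at h
  linarith

lemma gaussianReal_real_Ici_pos (μ : ℝ) {v : ℝ≥0} (hv : v ≠ 0) (s : ℝ) :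
    0 < (gaussianReal μ v).real (Ici s) :=
  ENNReal.toReal_pos
    (fun h => by simpa using gaussianReal_absolutelyContinuous' μ hv h) (measure_ne_top _ _)

lemma gaussianReal_real_Ici (s : ℝ) :
    (gaussianReal 0 1).real (Ici s) = ∫ x in Ioi s, gaussianPDFReal 0 1 x := by
  rw [measureReal_def, gaussianReal_apply_eq_integral 0 one_ne_zero, ENNReal.toReal_ofReal
    (setIntegral_nonneg measurableSet_Ici fun x _ => gaussianPDFReal_nonneg 0 1 x),
    integral_Ici_eq_integral_Ioi]

variable {s : ℝ}

lemma setIntegral_le_abs_gaussianReal_comp_abs (hs : 0 ≤ s) (f : ℝ → ℝ) :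
    ∫ x in {x : ℝ | s ≤ |x|}, f |x| ∂gaussianReal 0 1
      = 2 * ∫ x in Ioi s, gaussianPDFReal 0 1 x * f x := by
  rw [setIntegral_gaussianReal_eq_setIntegral_smul one_ne_zero
    (measurableSet_le measurable_const measurable_abs), ← setIntegral_le_abs_comp_abs hs]
  simp only [smul_eq_mul, gaussianPDFReal_zero_abs]

lemma gaussianReal_real_le_abs (hs : 0 ≤ s) :
    (gaussianReal 0 1).real {x : ℝ | s ≤ |x|} = 2 * (gaussianReal 0 1).real (Ici s) := by
  simpa [gaussianReal_real_Ici] using setIntegral_le_abs_gaussianReal_comp_abs hs fun _ => 1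

lemma setIntegral_le_abs_sign_mul_self_gaussianReal (hs : 0 ≤ s) :
    ∫ x in {x : ℝ | s ≤ |x|}, Real.sign x * x ∂gaussianReal 0 1 = 2 * gaussianPDFReal 0 1 s := by
  simp_rw [Real.sign_mul_self_eq_abs]
  rw [setIntegral_le_abs_gaussianReal_comp_abs hs (fun x => x)]
  simp_rw [mul_comm (gaussianPDFReal 0 1 _), integral_Ioi_mul_gaussianPDFReal]

lemma setIntegral_le_abs_sq_gaussianReal (hs : 0 ≤ s) :
    ∫ x in {x : ℝ | s ≤ |x|}, x ^ 2 ∂gaussianReal 0 1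
      = 2 * (s * gaussianPDFReal 0 1 s + (gaussianReal 0 1).real (Ici s)) := by
  have := setIntegral_le_abs_gaussianReal_comp_abs hs (· ^ 2)
  simp only [sq_abs] at this
  rw [this]
  simp_rw [mul_comm (gaussianPDFReal 0 1 _), integral_Ioi_sq_mul_gaussianPDFReal,
    gaussianReal_real_Ici]

lemma setIntegral_le_abs_sign_mul_self_gaussianReal_div (hs : 0 ≤ s) :
    (∫ x in {x : ℝ | s ≤ |x|}, Real.sign x * x ∂gaussianReal 0 1)
        / (gaussianReal 0 1).real {x : ℝ | s ≤ |x|}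
      = gaussianPDFReal 0 1 s / (gaussianReal 0 1).real (Ici s) := by
  rw [setIntegral_le_abs_sign_mul_self_gaussianReal hs, gaussianReal_real_le_abs hs,
    mul_div_mul_left _ _ two_ne_zero]

lemma setIntegral_le_abs_sq_gaussianReal_div (hs : 0 ≤ s) :
    (∫ x in {x : ℝ | s ≤ |x|}, x ^ 2 ∂gaussianReal 0 1) / (gaussianReal 0 1).real {x : ℝ | s ≤ |x|}
      = 1 + s * (gaussianPDFReal 0 1 s / (gaussianReal 0 1).real (Ici s)) := by
  have := gaussianReal_real_Ici_pos 0 one_ne_zero s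
  rw [setIntegral_le_abs_sq_gaussianReal hs, gaussianReal_real_le_abs hs]
  field_simp
  ring

end ProbabilityTheory

section LeastSquares

variable {α : Type*} [MeasurableSpace α] {μ : Measure α} {X Y : α → ℝ}

lemma integral_mul_sub_sq (hX : MemLp X 2 μ) (hY : MemLp Y 2 μ) (u : ℝ) :
    ∫ a, (X a * u - Y a) ^ 2 ∂μ
      = u ^ 2 * ∫ a, X a ^ 2 ∂μ - 2 * u * ∫ a, Y a * X a ∂μ + ∫ a, Y a ^ 2 ∂μ := by
  have hXX : Integrable (fun a => u ^ 2 * X a ^ 2) μ := hX.integrable_sq.const_mul _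
  have hYX : Integrable (fun a => 2 * u * (Y a * X a)) μ := (hY.integrable_mul hX).const_mul _
  calc ∫ a, (X a * u - Y a) ^ 2 ∂μ
      = ∫ a, (u ^ 2 * X a ^ 2 + Y a ^ 2 - 2 * u * (Y a * X a)) ∂μ := by
        congr with a; ring
    _ = _ := by
      rw [integral_sub (hXX.fun_add hY.integrable_sq) hYX, integral_add hXX hY.integrable_sq,
        integral_const_mul, integral_const_mul]
      ring

lemma integral_mul_sub_sq_le (hX : MemLp X 2 μ) (hY : MemLp Y 2 μ)
    (hX₀ : 0 < ∫ a, X a ^ 2 ∂μ) (u : ℝ) :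
    ∫ a, (X a * ((∫ a, Y a * X a ∂μ) / ∫ a, X a ^ 2 ∂μ) - Y a) ^ 2 ∂μ
      ≤ ∫ a, (X a * u - Y a) ^ 2 ∂μ := by
  rw [integral_mul_sub_sq hX hY, integral_mul_sub_sq hX hY]
  set q := ∫ a, X a ^ 2 ∂μ
  set c := ∫ a, Y a * X a ∂μ
  have hsquare : u ^ 2 * q - 2 * u * c - ((c / q) ^ 2 * q - 2 * (c / q) * c)
      = q * (u - c / q) ^ 2 := by
    field_simp; ring
  linarith [mul_nonneg hX₀.le (sq_nonneg (u - c / q))]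

end LeastSquares

namespace ProbabilityTheory

lemma integral_sq_gaussianReal_zero (v : ℝ≥0) : ∫ x, x ^ 2 ∂gaussianReal 0 v = v := by
  rw [← variance_of_integral_eq_zero aemeasurable_id' integral_id_gaussianReal,
    variance_fun_id_gaussianReal]

section ProdGaussian

variable {α : Type*} [MeasurableSpace α] {μ : Measure α} [IsFiniteMeasure μ] {ε : ℝ≥0}

lemma integral_prod_gaussianReal_mul_snd (f : α → ℝ) :
    ∫ p, f p.1 * p.2 ∂μ.prod (gaussianReal 0 ε) = 0 := by
  rw [integral_prod_mul f (fun y => y), integral_id_gaussianReal, mul_zero]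

lemma integral_prod_gaussianReal_snd_sq :
    ∫ p, p.2 ^ 2 ∂μ.prod (gaussianReal 0 ε) = μ.real univ * ε := by
  rw [integral_fun_snd (fun y => y ^ 2), integral_sq_gaussianReal_zero, smul_eq_mul]

lemma integral_prod_gaussianReal_add_mul_snd_sq {f : α → ℝ} (hf : MemLp f 2 μ) (v : ℝ) :
    ∫ p, (f p.1 + p.2 * v) ^ 2 ∂μ.prod (gaussianReal 0 ε)
      = ∫ x, f x ^ 2 ∂μ + v ^ 2 * (μ.real univ * ε) := by
  have h₁ : Integrable (fun p : α × ℝ => f p.1 ^ 2) (μ.prod (gaussianReal 0 ε)) :=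
    hf.integrable_sq.comp_fst _
  have h₂ : Integrable (fun p : α × ℝ => f p.1 * p.2) (μ.prod (gaussianReal 0 ε)) :=
    by simpa using (hf.integrable one_le_two).mul_prod (integrable_pow_gaussianReal 0 ε 1)
  have h₃ : Integrable (fun p : α × ℝ => p.2 ^ 2) (μ.prod (gaussianReal 0 ε)) :=
    (integrable_pow_gaussianReal 0 ε 2).comp_snd _
  calc ∫ p, (f p.1 + p.2 * v) ^ 2 ∂μ.prod (gaussianReal 0 ε)
      = ∫ p, (f p.1 ^ 2 + 2 * v * (f p.1 * p.2) + v ^ 2 * p.2 ^ 2) ∂μ.prod (gaussianReal 0 ε) := by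
        congr with p; ring
    _ = _ := by
      rw [integral_add (h₁.fun_add (h₂.const_mul _)) (h₃.const_mul _),
        integral_add h₁ (h₂.const_mul _), integral_const_mul, integral_const_mul,
        integral_prod_gaussianReal_mul_snd, integral_prod_gaussianReal_snd_sq,
        integral_fun_fst (fun x => f x ^ 2), probReal_univ, one_smul]
      ring

variable {X Y : α → ℝ}

lemma integral_prod_gaussianReal_sq_sub_le (hX : MemLp X 2 μ) (hY : MemLp Y 2 μ)
    (hX₀ : 0 < ∫ a, X a ^ 2 ∂μ) (w : ℝ × ℝ) :
    ∫ p, (X p.1 * ((∫ a, Y a * X a ∂μ) / ∫ a, X a ^ 2 ∂μ) + p.2 * 0 - Y p.1) ^ 2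
        ∂μ.prod (gaussianReal 0 ε)
      ≤ ∫ p, (X p.1 * w.1 + p.2 * w.2 - Y p.1) ^ 2 ∂μ.prod (gaussianReal 0 ε) := by
  have hloss (u v : ℝ) :
      ∫ p, (X p.1 * u + p.2 * v - Y p.1) ^ 2 ∂μ.prod (gaussianReal 0 ε)
        = ∫ a, (X a * u - Y a) ^ 2 ∂μ + v ^ 2 * (μ.real univ * ε) := by
    rw [← integral_prod_gaussianReal_add_mul_snd_sq (f := fun a => X a * u - Y a)
      ((hX.mul_const u).sub hY) v]
    congr with p; ring
  rw [hloss, hloss, zero_pow two_ne_zero, zero_mul, add_zero]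
  exact (integral_mul_sub_sq_le hX hY hX₀ w.1).trans (le_add_of_nonneg_right (by positivity))

end ProdGaussian

end ProbabilityTheory

theorem toy_population_moments_general
    (ε : NNReal) (s : ℝ) (hs : 0 ≤ s)
    (ν : Measure (ℝ × ℝ))
    (hν : ν = (gaussianReal 0 1).prod (gaussianReal 0 ε))
    (E : Set (ℝ × ℝ)) (hE : E = {p : ℝ × ℝ | s ≤ |p.1|})
    (φ Q : ℝ → ℝ)
    (hφ : ∀ t, φ t = (Real.sqrt (2 * Real.pi))⁻¹ * Real.exp (-t ^ 2 / 2))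
    (hQ : ∀ t, Q t = ((gaussianReal 0 1) {x | t ≤ x}).toReal)
    (m₁ m₂ : ℝ) (hm₁ : m₁ = φ s / Q s) (hm₂ : m₂ = 1 + s * m₁) :
    (∫ p in E, Real.sign p.1 * p.1 ∂ν) / (ν E).toReal = m₁ ∧
    (∫ p in E, Real.sign p.1 * p.2 ∂ν) / (ν E).toReal = 0 ∧
    (∫ p in E, p.1 ^ 2 ∂ν) / (ν E).toReal = m₂ ∧
    (∫ p in E, p.1 * p.2 ∂ν) / (ν E).toReal = 0 ∧
    (∫ p in E, p.2 ^ 2 ∂ν) / (ν E).toReal = (ε : ℝ) ∧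
    0 < m₁ / m₂ ∧
    (∀ w : ℝ × ℝ,
      (∫ p in E, (p.1 * (m₁ / m₂) + p.2 * 0 - Real.sign p.1) ^ 2 ∂ν)
          / (ν E).toReal
        ≤ (∫ p in E, (p.1 * w.1 + p.2 * w.2 - Real.sign p.1) ^ 2 ∂ν)
          / (ν E).toReal) := by
  subst hν hE
  set N := gaussianReal 0 1
  set A := {x : ℝ | s ≤ |x|}
  have hφs : φ s = gaussianPDFReal 0 1 s := by simp [hφ, gaussianPDFReal]
  have hm₁' : (∫ x in A, Real.sign x * x ∂N) / N.real A = m₁ := by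
    rw [hm₁, hφs, hQ, setIntegral_le_abs_sign_mul_self_gaussianReal_div hs]; rfl
  have hm₂' : (∫ x in A, x ^ 2 ∂N) / N.real A = m₂ := by
    rw [hm₂, hm₁, hφs, hQ, setIntegral_le_abs_sq_gaussianReal_div hs]; rfl
  have hNA : 0 < N.real A := by
    rw [gaussianReal_real_le_abs hs]; have := gaussianReal_real_Ici_pos 0 one_ne_zero s; positivity
  have hm₁pos : 0 < m₁ := by
    rw [hm₁, hφs, hQ]; exact div_pos (gaussianPDFReal_pos 0 1 s one_ne_zero)
      (gaussianReal_real_Ici_pos 0 one_ne_zero s)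
  have hm₂pos : 0 < m₂ := by rw [hm₂]; positivity
  have hEA : {p : ℝ × ℝ | s ≤ |p.1|} = A ×ˢ univ := by ext; simp [A]
  rw [hEA, ← Measure.prod_restrict, Measure.restrict_univ, Measure.prod_prod, measure_univ,
    mul_one, ← measureReal_def]
  refine ⟨?_, ?_, ?_, ?_, ?_, div_pos hm₁pos hm₂pos,
    fun w => div_le_div_of_nonneg_right ?_ hNA.le⟩
  · rwa [integral_fun_fst (fun x => Real.sign x * x), probReal_univ, one_smul]
  · rw [integral_prod_gaussianReal_mul_snd, zero_div]
  · rwa [integral_fun_fst (fun x => x ^ 2), probReal_univ, one_smul]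
  · rw [integral_prod_gaussianReal_mul_snd (fun x => x), zero_div]
  · rw [integral_prod_gaussianReal_snd_sq, measureReal_restrict_apply_univ]
    field_simp
  · rw [← hm₁', ← hm₂', div_div_div_cancel_right₀ hNA.ne']
    exact integral_prod_gaussianReal_sq_sub_le (X := fun x => x)
      ((memLp_id_gaussianReal 2).restrict A)
      (.of_bound Real.measurable_sign.aestronglyMeasurable 1 (ae_of_all _ Real.abs_sign_le_one))
      ((div_pos_iff_of_pos_right hNA).mp (hm₂' ▸ hm₂pos)) w

/-- Population moments of `x = z` conditioned on `|z⁽¹⁾| ≥ s`, for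
`z ~ N(0, diag(1, ε))`, with label `y = sign(x⁽¹⁾)`:
`E[y·x] = (m₁, 0)` with `m₁ = φ(s)/Q(s)`, `E[x xᵀ] = diag(m₂, ε)` with
`m₂ = 1 + s m₁`, and consequently the population least-squares solution
`argmin_w E[(xᵀw − y)²]` is `(m₁/m₂, 0)`, a positive multiple of the
Bayes-optimal direction `e₁`. -/
theorem toy_population_moments
    (ε : NNReal) (hε : 0 < ε) (s : ℝ) (hs : 0 ≤ s)
    (ν : Measure (ℝ × ℝ))
    (hν : ν = (gaussianReal 0 1).prod (gaussianReal 0 ε))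
    (E : Set (ℝ × ℝ)) (hE : E = {p : ℝ × ℝ | s ≤ |p.1|})
    (φ Q : ℝ → ℝ)
    (hφ : ∀ t, φ t = (Real.sqrt (2 * Real.pi))⁻¹ * Real.exp (-t ^ 2 / 2))
    (hQ : ∀ t, Q t = ((gaussianReal 0 1) {x | t ≤ x}).toReal)
    (m₁ m₂ : ℝ) (hm₁ : m₁ = φ s / Q s) (hm₂ : m₂ = 1 + s * m₁) :
    (∫ p in E, Real.sign p.1 * p.1 ∂ν) / (ν E).toReal = m₁ ∧
    (∫ p in E, Real.sign p.1 * p.2 ∂ν) / (ν E).toReal = 0 ∧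
    (∫ p in E, p.1 ^ 2 ∂ν) / (ν E).toReal = m₂ ∧
    (∫ p in E, p.1 * p.2 ∂ν) / (ν E).toReal = 0 ∧
    (∫ p in E, p.2 ^ 2 ∂ν) / (ν E).toReal = (ε : ℝ) ∧
    0 < m₁ / m₂ ∧
    (∀ w : ℝ × ℝ,
      (∫ p in E, (p.1 * (m₁ / m₂) + p.2 * 0 - Real.sign p.1) ^ 2 ∂ν)
          / (ν E).toReal
        ≤ (∫ p in E, (p.1 * w.1 + p.2 * w.2 - Real.sign p.1) ^ 2 ∂ν)
          / (ν E).toReal) :=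
  toy_population_moments_general ε s hs ν hν E hE φ Q hφ hQ m₁ m₂ hm₁ hm₂
end
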